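/- Let d ≥ 1 and let C : ℝ^d → ℝ be an even function of the form C(u) = A(‖u‖) + B(‖u‖) + r(u), where A : ℝ → ℝ is even and real-analytic on ℝ, B : ℝ → ℝ satisfies B(0) = 0 and B(t) = c·t^α + o(t^α) as t ↓ 0 for some c ∈ ℝ and 0 < α < 4, and r satisfies r(0) = 0 and r(u) = o(‖u‖^α) as u → 0. For h > 0 define V(h) = h^{−4} · Σ_{g=1}^d Σ_{g'=1}^d [ 4·C(0) − 2·C(h·e_g) − 2·C(−h·e_g) − 2·C(h·e_{g'}) − 2·C(−h·e_{g'}) + C(h·(e_g − e_{g'})) + C(h·(e_g + e_{g'})) + C(−h·(e_g − e_{g'})) + C(−h·(e_g + e_{g'})) ], where e_g is the g-th standard basis vector of ℝ^d. Then V(h) = γ·c·h^{α−4} + o(h^{α−4}) as h ↓ 0, where γ = d·(2^{α+1} − 8) + d(d−1)·(2^{α/2+2} − 8). -/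

import Mathlib

open Filter Asymptotics
open scoped Topology

noncomputable section

/-- The discrete-Laplacian covariance combination `V(h)` of Statement 15. -/
def lapCovCombination (d : ℕ) (C : EuclideanSpace ℝ (Fin d) → ℝ) (h : ℝ) : ℝ :=
  (1 / h ^ 4) *
    ∑ g : Fin d, ∑ g' : Fin d,
      (4 * C 0
        - 2 * C (h • EuclideanSpace.single g (1 : ℝ))
        - 2 * C (-(h • EuclideanSpace.single g (1 : ℝ)))
        - 2 * C (h • EuclideanSpace.single g' (1 : ℝ))
        - 2 * C (-(h • EuclideanSpace.single g' (1 : ℝ)))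
        + C (h • (EuclideanSpace.single g (1 : ℝ) - EuclideanSpace.single g' (1 : ℝ)))
        + C (h • (EuclideanSpace.single g (1 : ℝ) + EuclideanSpace.single g' (1 : ℝ)))
        + C (-(h • (EuclideanSpace.single g (1 : ℝ) - EuclideanSpace.single g' (1 : ℝ))))
        + C (-(h • (EuclideanSpace.single g (1 : ℝ) + EuclideanSpace.single g' (1 : ℝ)))))

/-!
Write `C (h • w) = A (‖w‖ h) + B (‖w‖ h) + r (h • w)`. Since `A` is even and analytic,
`A t = A 0 + k t² + O(t⁴)`, while the `B` term contributes `c ‖w‖^α h^α + o(h^α)` and the `r`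
term only `o(h^α)`. In each summand of `V(h)` the constants cancel because the weights sum to
zero, the `h²` terms cancel by the parallelogram law, and `O(h⁴) = o(h^α)` because `α < 4`.
What is left is `c h^α` times `2‖e_g - e_g'‖^α + 2‖e_g + e_g'‖^α - 8`, which is `2^(α+1) - 8`
for `g = g'` and `2^(α/2+2) - 8` otherwise.
-/

theorem Function.Even.iteratedDeriv_zero_of_odd {𝕜 F : Type*} [NontriviallyNormedField 𝕜]
    [CharZero 𝕜] [NormedAddCommGroup F] [NormedSpace 𝕜 F] {f : 𝕜 → F}
    (hf : Function.Even f) {n : ℕ} (hn : Odd n) : iteratedDeriv n f 0 = 0 := by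
  have h := iteratedDeriv_comp_neg n f 0
  rw [funext hf, neg_zero, hn.neg_one_pow, neg_one_smul, eq_neg_iff_add_eq_zero, ← two_smul 𝕜,
    smul_eq_zero] at h
  exact h.resolve_left two_ne_zero

theorem AnalyticAt.isBigO_sub_quadratic_of_even {𝕜 : Type*} [NontriviallyNormedField 𝕜]
    [CompleteSpace 𝕜] [CharZero 𝕜] {f : 𝕜 → 𝕜} (hf : AnalyticAt 𝕜 f 0)
    (heven : Function.Even f) :
    (fun t => f t - (f 0 + iteratedDeriv 2 f 0 / 2 * t ^ 2)) =O[𝓝 0] fun t => t ^ 4 := by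
  have htaylor := hf.hasFPowerSeriesAt.isBigO_sub_partialSum_pow 4
  simp only [zero_add] at htaylor
  refine (htaylor.congr_left fun t => ?_).trans ?_
  · simp [mul_comm, FormalMultilinearSeries.partialSum, Finset.sum_range_succ,
      heven.iteratedDeriv_zero_of_odd (n := 1) (by decide),
      heven.iteratedDeriv_zero_of_odd (n := 3) (by decide)]
  · simp_rw [← norm_pow]
    exact (isBigO_refl _ _).norm_left

theorem isLittleO_pow_rpow_nhdsGT_zero {n : ℕ} {α : ℝ} (hα : α < n) :
    (fun h : ℝ => h ^ n) =o[𝓝[>] 0] fun h => h ^ α := by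
  have hsmall : Tendsto (fun h : ℝ => h ^ ((n : ℝ) - α)) (𝓝[>] 0) (𝓝 0) := by
    have hcont := Real.continuousAt_rpow_const 0 ((n : ℝ) - α) (Or.inr (sub_pos.mpr hα).le)
    rw [ContinuousAt, Real.zero_rpow (sub_pos.mpr hα).ne'] at hcont
    exact hcont.mono_left nhdsWithin_le_nhds
  refine ((isLittleO_one_iff ℝ).mpr hsmall).mul_isBigO (isBigO_refl (fun h : ℝ => h ^ α) _)
    |>.congr' ?_ (by simp)
  filter_upwards [self_mem_nhdsWithin] with h (hh : 0 < h)
  rw [← Real.rpow_add hh, sub_add_cancel, Real.rpow_natCast]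

theorem isLittleO_comp_const_mul_rpow {B : ℝ → ℝ} {c α : ℝ} (hα : 0 < α) (hB0 : B 0 = 0)
    (hB : (fun t => B t - c * t ^ α) =o[𝓝[>] 0] fun t => t ^ α) {s : ℝ} (hs : 0 ≤ s) :
    (fun h => B (s * h) - c * s ^ α * h ^ α) =o[𝓝[>] 0] fun h => h ^ α := by
  rcases hs.eq_or_lt with rfl | hs
  · simp [hB0, Real.zero_rpow hα.ne']
  have hmul : Tendsto (s * ·) (𝓝[>] 0) (𝓝[>] 0) :=
    tendsto_iff_comap.mpr (comap_mulLeft_nhdsGT_zero hs).ge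
  have hmul_rpow : ∀ᶠ h in 𝓝[>] 0, (s * h) ^ α = s ^ α * h ^ α := by
    filter_upwards [self_mem_nhdsWithin] with h (hh : 0 < h)
    exact Real.mul_rpow hs.le hh.le
  have hscale : (fun h : ℝ => (s * h) ^ α) =O[𝓝[>] 0] fun h => h ^ α :=
    (isBigO_const_mul_self (s ^ α) _ _).congr' (hmul_rpow.mono fun _ => Eq.symm) .rfl
  refine ((hB.comp_tendsto hmul).trans_isBigO hscale).congr' ?_ .rfl
  filter_upwards [hmul_rpow] with h hh
  simp only [Function.comp_apply, hh]
  ring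

theorem isLittleO_comp_smul_rpow {E : Type*} [NormedAddCommGroup E] [NormedSpace ℝ E]
    {r : E → ℝ} {α : ℝ} (hr : r =o[𝓝 0] fun u => ‖u‖ ^ α) (v : E) :
    (fun h : ℝ => r (h • v)) =o[𝓝[>] 0] fun h => h ^ α := by
  have hsmul : Tendsto (fun h : ℝ => h • v) (𝓝[>] 0) (𝓝 0) := by
    have hcont : Continuous fun h : ℝ => h • v := continuous_id.smul continuous_const
    simpa using (hcont.tendsto 0).mono_left nhdsWithin_le_nhds
  have hscale : (fun h : ℝ => ‖h • v‖ ^ α) =O[𝓝[>] 0] fun h => h ^ α := by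
    refine (isBigO_const_mul_self (‖v‖ ^ α) _ _).congr' ?_ .rfl
    filter_upwards [self_mem_nhdsWithin] with h (hh : 0 < h)
    rw [norm_smul, Real.norm_of_nonneg hh.le, Real.mul_rpow hh.le (norm_nonneg v), mul_comm]
  exact (hr.comp_tendsto hsmul).trans_isBigO hscale

theorem isLittleO_smul_sub_covariance_expansion {E : Type*} [NormedAddCommGroup E]
    [NormedSpace ℝ E] {C r : E → ℝ} {A B : ℝ → ℝ} {c α : ℝ}
    (hdecomp : ∀ u, C u = A ‖u‖ + B ‖u‖ + r u) (hA : AnalyticAt ℝ A 0)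
    (hAeven : Function.Even A) (hα0 : 0 < α) (hα4 : α < 4) (hB0 : B 0 = 0)
    (hB : (fun t => B t - c * t ^ α) =o[𝓝[>] 0] fun t => t ^ α)
    (hr : r =o[𝓝 0] fun u => ‖u‖ ^ α) (v : E) :
    (fun h : ℝ => C (h • v)
        - (A 0 + iteratedDeriv 2 A 0 / 2 * ‖v‖ ^ 2 * h ^ 2 + c * ‖v‖ ^ α * h ^ α))
      =o[𝓝[>] 0] fun h => h ^ α := by
  have hscale : Tendsto (‖v‖ * ·) (𝓝 (0 : ℝ)) (𝓝 0) := by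
    simpa using (continuous_const_mul ‖v‖).tendsto 0
  have hA_quartic : (fun h : ℝ => A (‖v‖ * h) - (A 0 + iteratedDeriv 2 A 0 / 2 * (‖v‖ * h) ^ 2))
      =O[𝓝 0] fun h => h ^ 4 := by
    refine ((hA.isBigO_sub_quadratic_of_even hAeven).comp_tendsto hscale).trans ?_
    simpa only [Function.comp_def, mul_pow] using isBigO_const_mul_self (‖v‖ ^ 4) _ _
  have hA_small := (hA_quartic.mono nhdsWithin_le_nhds).trans_isLittleO
    (isLittleO_pow_rpow_nhdsGT_zero (n := 4) (by exact_mod_cast hα4))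
  have hB_small := isLittleO_comp_const_mul_rpow hα0 hB0 hB (norm_nonneg v)
  refine ((hA_small.add hB_small).add (isLittleO_comp_smul_rpow hr v)).congr' ?_ .rfl
  filter_upwards [self_mem_nhdsWithin] with h (hh : 0 < h)
  rw [hdecomp, norm_smul, Real.norm_of_nonneg hh.le, mul_comm h]
  ring

def lapCovTerm {E : Type*} [AddCommGroup E] [Module ℝ E] (C : E → ℝ) (u v : E) (h : ℝ) : ℝ :=
  4 * C 0 - 2 * C (h • u) - 2 * C (-(h • u)) - 2 * C (h • v) - 2 * C (-(h • v))
    + C (h • (u - v)) + C (h • (u + v)) + C (-(h • (u - v))) + C (-(h • (u + v)))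

theorem lapCovCombination_eq_sum_lapCovTerm (d : ℕ) (C : EuclideanSpace ℝ (Fin d) → ℝ)
    (h : ℝ) :
    lapCovCombination d C h = 1 / h ^ 4 * ∑ g : Fin d, ∑ g' : Fin d,
      lapCovTerm C (EuclideanSpace.single g 1) (EuclideanSpace.single g' 1) h :=
  rfl

def lapCovCoeff {E : Type*} [NormedAddCommGroup E] (α : ℝ) (u v : E) : ℝ :=
  2 * ‖u - v‖ ^ α + 2 * ‖u + v‖ ^ α - 4 * ‖u‖ ^ α - 4 * ‖v‖ ^ α

theorem isLittleO_lapCovTerm {E : Type*} [NormedAddCommGroup E] [InnerProductSpace ℝ E]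
    {C : E → ℝ} {l : Filter ℝ} {a k c α : ℝ} (hα : α ≠ 0)
    (hexp : ∀ v : E,
      (fun h => C (h • v) - (a + k * ‖v‖ ^ 2 * h ^ 2 + c * ‖v‖ ^ α * h ^ α)) =o[l]
        fun h => h ^ α)
    (u v : E) :
    (fun h => lapCovTerm C u v h - c * lapCovCoeff α u v * h ^ α)
      =o[l] fun h => h ^ α := by
  have h0 := (hexp 0).const_mul_left 4
  have hu := ((hexp u).add (hexp (-u))).const_mul_left 2
  have hv := ((hexp v).add (hexp (-v))).const_mul_left 2
  have huv := ((hexp (u - v)).add (hexp (u + v))).add ((hexp (-(u - v))).add (hexp (-(u + v))))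
  refine (((h0.sub hu).sub hv).add huv).congr (fun h => ?_) fun _ => rfl
  simp only [lapCovTerm, lapCovCoeff, smul_zero, smul_neg, norm_zero, norm_neg, Real.zero_rpow hα]
  linear_combination (-2 * k * h ^ 2) * parallelogram_law_with_norm ℝ u v

theorem lapCovCoeff_single {d : ℕ} {α : ℝ} (hα : α ≠ 0) (g g' : Fin d) :
    lapCovCoeff α (EuclideanSpace.single g (1 : ℝ)) (EuclideanSpace.single g' 1)
      = if g = g' then 2 ^ (α + 1) - 8 else 2 ^ (α / 2 + 2) - 8 := by
  rw [lapCovCoeff]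
  split_ifs with hgg
  · subst hgg
    rw [sub_self, ← two_smul ℝ, norm_smul, PiLp.norm_single, norm_zero, norm_one, Real.norm_two,
      mul_one, Real.zero_rpow hα, Real.one_rpow, Real.rpow_add_one two_ne_zero]
    ring
  · have horth : inner ℝ (EuclideanSpace.single g (1 : ℝ)) (EuclideanSpace.single g' 1) = 0 := by
      simp [EuclideanSpace.inner_single_left, Ne.symm hgg]
    have hrpow : ∀ w : EuclideanSpace ℝ (Fin d), ‖w‖ ^ 2 = 2 → ‖w‖ ^ α = 2 ^ (α / 2) := by
      intro w hw
      rw [← Real.sqrt_sq (norm_nonneg w), hw, Real.sqrt_eq_rpow, ← Real.rpow_mul zero_le_two]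
      ring_nf
    rw [hrpow _ (by rw [norm_sub_sq_real, horth, PiLp.norm_single, PiLp.norm_single]; norm_num),
      hrpow _ (by rw [norm_add_sq_real, horth, PiLp.norm_single, PiLp.norm_single]; norm_num),
      Real.rpow_add zero_lt_two, PiLp.norm_single, PiLp.norm_single, norm_one, Real.one_rpow,
      Real.rpow_two]
    ring

theorem Fin.sum_sum_ite_eq {R : Type*} [CommRing R] (d : ℕ) (a b : R) :
    ∑ g : Fin d, ∑ g' : Fin d, (if g = g' then a else b) = d * a + d * (d - 1) * b := by
  have hsplit : ∀ g g' : Fin d, (if g = g' then a else b) = b + if g = g' then a - b else 0 := by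
    intro g g'
    split_ifs <;> ring
  simp only [hsplit, Finset.sum_add_distrib, Finset.sum_ite_eq, Finset.mem_univ, if_true,
    Finset.sum_const, Finset.card_univ, Fintype.card_fin, nsmul_eq_mul]
  ring

theorem isLittleO_sum_lapCovTerm_single {d : ℕ} {C : EuclideanSpace ℝ (Fin d) → ℝ}
    {l : Filter ℝ} {a k c α : ℝ} (hα : α ≠ 0)
    (hexp : ∀ v : EuclideanSpace ℝ (Fin d),
      (fun h => C (h • v) - (a + k * ‖v‖ ^ 2 * h ^ 2 + c * ‖v‖ ^ α * h ^ α)) =o[l]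
        fun h => h ^ α) :
    (fun h => ∑ g : Fin d, ∑ g' : Fin d,
        lapCovTerm C (EuclideanSpace.single g 1) (EuclideanSpace.single g' 1) h
        - ((d : ℝ) * (2 ^ (α + 1) - 8) + d * (d - 1) * (2 ^ (α / 2 + 2) - 8)) * c * h ^ α)
      =o[l] fun h => h ^ α := by
  refine (IsLittleO.fun_sum (s := Finset.univ) fun g _ =>
    IsLittleO.fun_sum (s := Finset.univ) fun g' _ =>
      isLittleO_lapCovTerm hα hexp (EuclideanSpace.single g 1) (EuclideanSpace.single g' 1)).congr
    (fun h => ?_) fun _ => rfl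
  simp only [lapCovCoeff_single hα, Finset.sum_sub_distrib, ← Finset.sum_mul, ← Finset.mul_sum,
    Fin.sum_sum_ite_eq]
  ring

theorem one_div_pow_mul_rpow {h : ℝ} (hh : 0 < h) (n : ℕ) (α : ℝ) :
    1 / h ^ n * h ^ α = h ^ (α - n) := by
  rw [Real.rpow_sub hh, Real.rpow_natCast, one_div_mul_eq_div]

theorem laplacian_covariance_expansion_general
    (d : ℕ)
    (C : EuclideanSpace ℝ (Fin d) → ℝ)
    (A B : ℝ → ℝ) (r : EuclideanSpace ℝ (Fin d) → ℝ)
    (hAeven : ∀ t, A (-t) = A t) (hA : AnalyticOnNhd ℝ A Set.univ)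
    (c α : ℝ) (hα0 : 0 < α) (hα4 : α < 4)
    (hB0 : B 0 = 0)
    (hB : (fun t : ℝ => B t - c * t ^ α) =o[𝓝[>] (0 : ℝ)] fun t : ℝ => t ^ α)
    (hr : (fun u => r u) =o[𝓝 (0 : EuclideanSpace ℝ (Fin d))] fun u => ‖u‖ ^ α)
    (hdecomp : ∀ u, C u = A ‖u‖ + B ‖u‖ + r u) :
    (fun h : ℝ =>
        lapCovCombination d C h
          - ((d : ℝ) * ((2 : ℝ) ^ (α + 1) - 8)
              + (d : ℝ) * ((d : ℝ) - 1) * ((2 : ℝ) ^ (α / 2 + 2) - 8)) * c * h ^ (α - 4))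
      =o[𝓝[>] (0 : ℝ)] fun h : ℝ => h ^ (α - 4) := by
  have hsum := isLittleO_sum_lapCovTerm_single hα0.ne'
    (isLittleO_smul_sub_covariance_expansion hdecomp (hA 0 trivial) hAeven hα0 hα4 hB0 hB hr)
  refine ((isBigO_refl (fun h : ℝ => 1 / h ^ 4) _).mul_isLittleO hsum).congr' ?_ ?_
  all_goals
    filter_upwards [self_mem_nhdsWithin] with h (hh : 0 < h)
    have hscale : 1 / h ^ 4 * h ^ α = h ^ (α - 4) := by exact_mod_cast one_div_pow_mul_rpow hh 4 α
  · rw [lapCovCombination_eq_sum_lapCovTerm, ← hscale]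
    ring
  · exact hscale

/-- Lemma S1 of the supplement. For an even covariance
`C(u) = A(‖u‖) + B(‖u‖) + r(u)` with `A` even analytic, `B(t) = c t^α + o(t^α)`
(`0 < α < 4`) and `r(u) = o(‖u‖^α)`, the Laplacian combination satisfies
`V(h) = γ c h^{α−4} + o(h^{α−4})` as `h ↓ 0` with
`γ = d(2^{α+1} − 8) + d(d−1)(2^{α/2+2} − 8)`. -/
theorem laplacian_covariance_expansion
    (d : ℕ) (hd : 1 ≤ d)
    (C : EuclideanSpace ℝ (Fin d) → ℝ) (hCeven : ∀ u, C (-u) = C u)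
    (A B : ℝ → ℝ) (r : EuclideanSpace ℝ (Fin d) → ℝ)
    (hAeven : ∀ t, A (-t) = A t) (hA : AnalyticOnNhd ℝ A Set.univ)
    (c α : ℝ) (hα0 : 0 < α) (hα4 : α < 4)
    (hB0 : B 0 = 0)
    (hB : (fun t : ℝ => B t - c * t ^ α) =o[𝓝[>] (0 : ℝ)] fun t : ℝ => t ^ α)
    (hr0 : r 0 = 0)
    (hr : (fun u => r u) =o[𝓝 (0 : EuclideanSpace ℝ (Fin d))] fun u => ‖u‖ ^ α)
    (hdecomp : ∀ u, C u = A ‖u‖ + B ‖u‖ + r u) :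
    (fun h : ℝ =>
        lapCovCombination d C h
          - ((d : ℝ) * ((2 : ℝ) ^ (α + 1) - 8)
              + (d : ℝ) * ((d : ℝ) - 1) * ((2 : ℝ) ^ (α / 2 + 2) - 8)) * c * h ^ (α - 4))
      =o[𝓝[>] (0 : ℝ)] fun h : ℝ => h ^ (α - 4) :=
  laplacian_covariance_expansion_general d C A B r hAeven hA c α hα0 hα4 hB0 hB hr hdecomp
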